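/- arXiv:1201.1490 — 2 statements merged into one kernel-verified Lean document; each statement's English description precedes it below -/
import Mathlib

section
/- Under simple random sampling of size n and conditioning on A₀ = {s : ∀h, |s ∩ U_h| = n_h}, the conditional inclusion probability of a unit k in stratum U_h equals n_h/N_h. -/
/-!
Swapping two units of the same stratum maps `A₀` onto itself and exchanges the samples containing
one of them with those containing the other, so every unit of `U_h` lies in the same number `c` of
samples of `A₀`. Counting the pairs `(j, s)` with `s ∈ A₀` and `j ∈ s ∩ U_h` in two ways gives
`N_h * c = |A₀| * n_h`, and since `p` is constant on `A₀`, `π_k^{A₀} = c / |A₀|`.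
-/

open Finset

theorem card_filter_mem_perm_eq {U : Type*} [DecidableEq U] {A : Finset (Finset U)}
    (σ : Equiv.Perm U)
    (hA : ∀ s, s.map σ.toEmbedding ∈ A ↔ s ∈ A) (j : U) :
    #{s ∈ A | σ j ∈ s} = #{s ∈ A | j ∈ s} := by
  refine card_bij' (fun s _ => s.map σ.symm.toEmbedding) (fun s _ => s.map σ.toEmbedding)
    ?_ ?_ ?_ ?_
  · intro s hs
    rw [mem_filter] at hs ⊢
    refine ⟨?_, by simpa using hs.2⟩
    rw [← hA]
    simpa [map_map] using hs.1
  · intro s hs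
    rw [mem_filter] at hs ⊢
    exact ⟨(hA s).2 hs.1, by simpa using hs.2⟩
  · intro s _
    simp [map_map]
  · intro s _
    simp [map_map]

section Stratification

variable {U ι : Type*} [Fintype U] [Fintype ι] [DecidableEq ι]

def stratifiedSamples (st : U → ι) (n : ℕ) (nh : ι → ℕ) : Finset (Finset U) :=
  {s ∈ univ.powersetCard n | ∀ h, #{x ∈ s | st x = h} = nh h}

variable {st : U → ι} {n : ℕ} {nh : ι → ℕ}

theorem stratifiedSamples_subset_powersetCard :
    stratifiedSamples st n nh ⊆ univ.powersetCard n :=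
  filter_subset _ _

theorem card_eq_of_mem_stratifiedSamples {s : Finset U} (hs : s ∈ stratifiedSamples st n nh) :
    #s = n :=
  (mem_powersetCard.1 (stratifiedSamples_subset_powersetCard hs)).2

theorem map_mem_stratifiedSamples_iff {σ : Equiv.Perm U} (hσ : ∀ x, st (σ x) = st x)
    (s : Finset U) :
    s.map σ.toEmbedding ∈ stratifiedSamples st n nh ↔ s ∈ stratifiedSamples st n nh := by
  simp [stratifiedSamples, filter_map, hσ]

theorem card_filter_mem_stratifiedSamples_eq [DecidableEq U] {j k : U}
    (hjk : st j = st k) :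
    #{s ∈ stratifiedSamples st n nh | j ∈ s} = #{s ∈ stratifiedSamples st n nh | k ∈ s} := by
  have hswap : ∀ x, st (Equiv.swap j k x) = st x := fun x => by
    rcases eq_or_ne x j with rfl | hxj
    · simp [hjk]
    rcases eq_or_ne x k with rfl | hxk
    · simp [hjk]
    · rw [Equiv.swap_apply_of_ne_of_ne hxj hxk]
  simpa using (card_filter_mem_perm_eq _ (map_mem_stratifiedSamples_iff hswap) j).symm

theorem card_stratum_mul_card_filter_mem [DecidableEq U] (k : U) :
    #{x | st x = st k} * #{s ∈ stratifiedSamples st n nh | k ∈ s} =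
      #(stratifiedSamples st n nh) * nh (st k) := by
  rw [← sum_card_inter fun j hj => card_filter_mem_stratifiedSamples_eq (mem_filter.1 hj).2,
    ← smul_eq_mul, ← sum_const]
  refine sum_congr rfl fun s hs => ?_
  rw [stratifiedSamples, mem_filter] at hs
  rw [← hs.2 (st k)]
  congr 1
  ext x
  simp [and_comm]

theorem stratifiedSamples_nonempty (hle : ∀ h, nh h ≤ #{x | st x = h})
    (hsum : ∑ h, nh h = n) :
    (stratifiedSamples st n nh).Nonempty := by
  classical
  choose t hsub hcard using fun h => exists_subset_card_eq (hle h)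
  have hst : ∀ {h x}, x ∈ t h → st x = h := fun hx => (mem_filter.1 (hsub _ hx)).2
  have hfiber : ∀ h, #{x ∈ univ.biUnion t | st x = h} = nh h := fun h => by
    rw [← hcard h]
    congr 1
    ext x
    simp only [mem_filter, mem_biUnion, mem_univ, true_and]
    exact ⟨fun ⟨⟨h', hx⟩, hxh⟩ => hxh ▸ hst hx ▸ hx, fun hx => ⟨⟨h, hx⟩, hst hx⟩⟩
  refine ⟨univ.biUnion t, ?_⟩
  simp only [stratifiedSamples, mem_filter, mem_powersetCard, subset_univ, true_and]
  refine ⟨?_, hfiber⟩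
  rw [card_eq_sum_card_fiberwise fun x _ => mem_univ (st x), ← hsum]
  exact sum_congr rfl fun h _ => hfiber h

end Stratification

theorem srs_post_stratification_inclusion_general {U : Type*} [Fintype U] [DecidableEq U]
    (H n : ℕ) (st : U → Fin H) (nh : Fin H → ℕ)
    (hle : ∀ h, nh h ≤ (Finset.univ.filter (fun k => st k = h)).card)
    (hsum : ∑ h, nh h = n)
    (A₀ : Finset (Finset U))
    (hA₀ : A₀ = (Finset.univ.powersetCard n).filter
      (fun s : Finset U => ∀ h, (s.filter (fun k => st k = h)).card = nh h))
    (p : Finset U → ℝ)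
    (hp : ∀ s : Finset U, p s =
      if s.card = n then ((Finset.univ.powersetCard n : Finset (Finset U)).card : ℝ)⁻¹ else 0)
    (k : U) (h : Fin H) (hk : st k = h) :
    (∑ s ∈ A₀.filter (fun s => k ∈ s), p s) / (∑ s ∈ A₀, p s) =
      (nh h : ℝ) / ((Finset.univ.filter (fun k => st k = h)).card : ℝ) := by
  subst hk
  replace hA₀ : A₀ = stratifiedSamples st n nh := by
    rw [hA₀, stratifiedSamples]
    -- the two sides differ only in the `Decidable` instance of `∀ h : Fin H, _`
    congr!
  subst hA₀
  set q := ((univ.powersetCard n : Finset (Finset U)).card : ℝ)⁻¹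
  have hp_sum : ∀ B ⊆ stratifiedSamples st n nh, ∑ s ∈ B, p s = #B * q := fun B hB => by
    rw [sum_congr rfl fun s hs => by rw [hp, if_pos (card_eq_of_mem_stratifiedSamples (hB hs))],
      sum_const, nsmul_eq_mul]
  have hne := stratifiedSamples_nonempty hle hsum
  have hq : q ≠ 0 :=
    inv_ne_zero <| Nat.cast_ne_zero.2 (hne.mono stratifiedSamples_subset_powersetCard).card_pos.ne'
  have hN : #{x | st x = st k} ≠ 0 := card_ne_zero_of_mem (mem_filter.2 ⟨mem_univ k, rfl⟩)
  rw [hp_sum _ (filter_subset _ _), hp_sum _ Subset.rfl, mul_div_mul_right _ _ hq,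
    div_eq_div_iff (Nat.cast_ne_zero.2 hne.card_pos.ne') (Nat.cast_ne_zero.2 hN),
    mul_comm, mul_comm (nh (st k) : ℝ)]
  exact_mod_cast card_stratum_mul_card_filter_mem k

/-- Under simple random sampling of size `n`, conditioning on the strata sample sizes
`A₀ = {s : ∀ h, |s ∩ U_h| = n_h}`, the conditional inclusion probability of a unit `k`
in stratum `U_h` equals `n_h / N_h`. -/
theorem srs_post_stratification_inclusion {U : Type*} [Fintype U] [DecidableEq U]
    (H n : ℕ) (st : U → Fin H) (nh : Fin H → ℕ)
    (hpos : ∀ h, 0 < nh h)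
    (hle : ∀ h, nh h ≤ (Finset.univ.filter (fun k => st k = h)).card)
    (hsum : ∑ h, nh h = n)
    (A₀ : Finset (Finset U))
    (hA₀ : A₀ = (Finset.univ.powersetCard n).filter
      (fun s : Finset U => ∀ h, (s.filter (fun k => st k = h)).card = nh h))
    (p : Finset U → ℝ)
    (hp : ∀ s : Finset U, p s =
      if s.card = n then ((Finset.univ.powersetCard n : Finset (Finset U)).card : ℝ)⁻¹ else 0)
    (k : U) (h : Fin H) (hk : st k = h) :
    (∑ s ∈ A₀.filter (fun s => k ∈ s), p s) / (∑ s ∈ A₀, p s) =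
      (nh h : ℝ) / ((Finset.univ.filter (fun k => st k = h)).card : ℝ) :=
  srs_post_stratification_inclusion_general H n st nh hle hsum A₀ hA₀ p hp k h hk
end

section
/- For conditional Poisson sampling of size n (Poisson sampling with parameters p_k conditioned on |s| = n), the inclusion probabilities f_k(U, p, n) = p(k ∈ s | |s| = n) satisfy the recursion f_k(U,p,n) = (p_k/(1−p_k)) · h(U,p,n) · (1 − f_k(U,p,n−1)), where h(U,p,n) = p̃(|s| = n−1)/p̃(|s| = n) and f_k(U,p,0) = 0. -/
open Finset

/-- Recursion for the inclusion probabilities of conditional Poisson sampling of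
size `n`: `f_k(U,p,n) = (p_k/(1−p_k)) · h(U,p,n) · (1 − f_k(U,p,n−1))`, where
`h(U,p,n) = p̃(|s|=n−1)/p̃(|s|=n)` and `f_k(U,p,0) = 0`. -/
theorem conditional_poisson_inclusion_recursion {U : Type*} [Fintype U] [DecidableEq U]
    (p : U → ℝ) (hp : ∀ k, p k ∈ Set.Ioo (0 : ℝ) 1)
    (pt : Finset U → ℝ)
    (hpt : ∀ s : Finset U, pt s = (∏ k ∈ s, p k) * ∏ k ∈ Finset.univ \ s, (1 - p k))
    (f : U → ℕ → ℝ)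
    (hf : ∀ k m, f k m =
      (∑ s ∈ Finset.univ.filter (fun s : Finset U => k ∈ s ∧ s.card = m), pt s) /
        (∑ s ∈ Finset.univ.filter (fun s : Finset U => s.card = m), pt s))
    (k : U) (n : ℕ) (hn : 1 ≤ n) (hnN : n ≤ Fintype.card U)
    (hpos : 0 < ∑ s ∈ Finset.univ.filter (fun s : Finset U => s.card = n), pt s)
    (hpos' : 0 < ∑ s ∈ Finset.univ.filter (fun s : Finset U => s.card = n - 1), pt s) :
    f k n = (p k / (1 - p k)) *
      ((∑ s ∈ Finset.univ.filter (fun s : Finset U => s.card = n - 1), pt s) /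
        (∑ s ∈ Finset.univ.filter (fun s : Finset U => s.card = n), pt s)) *
      (1 - f k (n - 1)) := by
  have hA : (∑ s ∈ Finset.univ.filter (fun s : Finset U => s.card = n), pt s) ≠ 0 :=
    ne_of_gt hpos
  have hA' : (∑ s ∈ Finset.univ.filter (fun s : Finset U => s.card = n - 1), pt s) ≠ 0 :=
    ne_of_gt hpos'
  have h1 : (1 : ℝ) - p k ≠ 0 := by have := (hp k).2; intro h; linarith
  have hins : ∀ s : Finset U, k ∉ s → pt (insert k s) = (p k / (1 - p k)) * pt s := by
    intro s hk
    have hcompl : Finset.univ \ s = insert k (Finset.univ \ insert k s) := by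
      ext x
      by_cases hx : x = k <;> simp [Finset.mem_sdiff, Finset.mem_insert, hx, hk]
    rw [hpt, hpt, Finset.prod_insert hk, hcompl, Finset.prod_insert (by simp)]
    field_simp
  have key : (∑ s ∈ Finset.univ.filter (fun s : Finset U => k ∈ s ∧ s.card = n), pt s)
      = (p k / (1 - p k)) *
        ∑ s ∈ Finset.univ.filter (fun s : Finset U => k ∉ s ∧ s.card = n - 1), pt s := by
    rw [Finset.mul_sum]
    apply Finset.sum_nbij' (fun s => s.erase k) (fun s => insert k s)
    · intro s hs
      simp only [Finset.mem_filter, Finset.mem_univ, true_and] at hs ⊢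
      exact ⟨Finset.notMem_erase _ _, by rw [Finset.card_erase_of_mem hs.1, hs.2]⟩
    · intro s hs
      simp only [Finset.mem_filter, Finset.mem_univ, true_and] at hs ⊢
      refine ⟨Finset.mem_insert_self _ _, ?_⟩
      rw [Finset.card_insert_of_notMem hs.1, hs.2]
      omega
    · intro s hs
      simp only [Finset.mem_filter, Finset.mem_univ, true_and] at hs
      exact Finset.insert_erase hs.1
    · intro s hs
      simp only [Finset.mem_filter, Finset.mem_univ, true_and] at hs
      exact Finset.erase_insert hs.1
    · intro s hs
      simp only [Finset.mem_filter, Finset.mem_univ, true_and] at hs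
      rw [← hins (s.erase k) (Finset.notMem_erase _ _), Finset.insert_erase hs.1]
  have split : (∑ s ∈ Finset.univ.filter (fun s : Finset U => s.card = n - 1), pt s)
      = (∑ s ∈ Finset.univ.filter (fun s : Finset U => k ∈ s ∧ s.card = n - 1), pt s)
      + ∑ s ∈ Finset.univ.filter (fun s : Finset U => k ∉ s ∧ s.card = n - 1), pt s := by
    rw [← Finset.sum_filter_add_sum_filter_not
      (Finset.univ.filter (fun s : Finset U => s.card = n - 1)) (fun s => k ∈ s)]
    congr 1 <;> · congr 1; ext s; simp [Finset.filter_filter, and_comm]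
  have hC : (∑ s ∈ Finset.univ.filter (fun s : Finset U => k ∉ s ∧ s.card = n - 1), pt s)
      = (∑ s ∈ Finset.univ.filter (fun s : Finset U => s.card = n - 1), pt s)
        - ∑ s ∈ Finset.univ.filter (fun s : Finset U => k ∈ s ∧ s.card = n - 1), pt s := by
    linarith [split]
  rw [hf k n, hf k (n - 1), key, hC]
  set A := ∑ s ∈ Finset.univ.filter (fun s : Finset U => s.card = n), pt s with hAdef
  set A' := ∑ s ∈ Finset.univ.filter (fun s : Finset U => s.card = n - 1), pt s with hA'def
  set B' := ∑ s ∈ Finset.univ.filter (fun s : Finset U => k ∈ s ∧ s.card = n - 1), pt s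
  field_simp
end
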